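/- (Non-autonomous Hénon–Heiles system: classical Frobenius condition.) For all (t_1, t_2) ∈ ℝ² and all (x_1, x_2, y_1, y_2) with x_2 ≠ 0: ∂H_1/∂t_2 − ∂H_2/∂t_1 + {H_1, H_2} = 0. -/

import Mathlib

/-!
Both Hamiltonians are rational in the phase variables, with `x₂` as the only denominator, and
quadratic in the times. So the Frobenius condition is a direct computation: write the
differentials `dH₁`, `dH₂` in the coordinate covectors `dxᵢ`, `dyᵢ`, read the Poisson bracket off
their components, and clear the powers of `x₂`.
-/

noncomputable section

open scoped BigOperators

namespace P3

/-- Partial derivative in the `x_i` direction on phase space `ℝ^{2n}`. -/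
def pdq (n : ℕ) (i : Fin n) (f : ((Fin n → ℝ) × (Fin n → ℝ)) → ℝ)
    (z : (Fin n → ℝ) × (Fin n → ℝ)) : ℝ :=
  fderiv ℝ f z (Pi.single i 1, 0)

/-- Partial derivative in the `y_i` direction on phase space `ℝ^{2n}`. -/
def pdp (n : ℕ) (i : Fin n) (f : ((Fin n → ℝ) × (Fin n → ℝ)) → ℝ)
    (z : (Fin n → ℝ) × (Fin n → ℝ)) : ℝ :=
  fderiv ℝ f z (0, Pi.single i 1)

/-- Canonical Poisson bracket on `ℝ^{2n}`. -/
def pbr (n : ℕ) (f g : ((Fin n → ℝ) × (Fin n → ℝ)) → ℝ)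
    (z : (Fin n → ℝ) × (Fin n → ℝ)) : ℝ :=
  ∑ i : Fin n, (pdq n i f z * pdp n i g z - pdp n i f z * pdq n i g z)

/-- First Hamiltonian of the non-autonomous Hénon–Heiles system (in flat
coordinates `x_1 = z.1 0`, `x_2 = z.1 1`, `y_1 = z.2 0`, `y_2 = z.2 1`). -/
def HH1 (a t1 t2 : ℝ) (z : (Fin 2 → ℝ) × (Fin 2 → ℝ)) : ℝ :=
  (1 / 2) * (z.2 0) ^ 2 + (1 / 2) * (z.2 1) ^ 2 + (z.1 0) ^ 3
    + (1 / 2) * (z.1 0) * (z.1 1) ^ 2 + a * ((z.1 1) ^ 2)⁻¹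
    + 3 * t2 * ((z.1 0) ^ 2 + (1 / 4) * (z.1 1) ^ 2) + (t1 + 3 * t2 ^ 2) * (z.1 0)

/-- Second Hamiltonian of the non-autonomous Hénon–Heiles system. -/
def HH2 (a t1 t2 : ℝ) (z : (Fin 2 → ℝ) × (Fin 2 → ℝ)) : ℝ :=
  (1 / 2) * (z.1 1) * (z.2 0) * (z.2 1) - (1 / 2) * (z.1 0) * (z.2 1) ^ 2 - z.2 0
    + (1 / 16) * (z.1 1) ^ 4 + (1 / 4) * (z.1 0) ^ 2 * (z.1 1) ^ 2
    - a * (z.1 0) * ((z.1 1) ^ 2)⁻¹ + (3 / 4) * t2 * (z.1 0) * (z.1 1) ^ 2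
    + (1 / 4) * (t1 + 3 * t2 ^ 2) * (z.1 1) ^ 2
    - ((1 / 2) * t1 ^ 2 + 3 * t1 * t2 ^ 2)

abbrev PhaseSpace (n : ℕ) := (Fin n → ℝ) × (Fin n → ℝ)

def coordX (n : ℕ) (i : Fin n) : PhaseSpace n →L[ℝ] ℝ :=
  (ContinuousLinearMap.proj i).comp (ContinuousLinearMap.fst ℝ _ _)

def coordY (n : ℕ) (i : Fin n) : PhaseSpace n →L[ℝ] ℝ :=
  (ContinuousLinearMap.proj i).comp (ContinuousLinearMap.snd ℝ _ _)

section PhaseSpace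

variable {n : ℕ} {z : PhaseSpace n}

@[simp]
lemma coordX_apply (i : Fin n) (w : PhaseSpace n) : coordX n i w = w.1 i := rfl

@[simp]
lemma coordY_apply (i : Fin n) (w : PhaseSpace n) : coordY n i w = w.2 i := rfl

lemma hasFDerivAt_coordX (i : Fin n) :
    HasFDerivAt (fun w : PhaseSpace n => w.1 i) (coordX n i) z :=
  (coordX n i).hasFDerivAt

lemma hasFDerivAt_coordY (i : Fin n) :
    HasFDerivAt (fun w : PhaseSpace n => w.2 i) (coordY n i) z :=
  (coordY n i).hasFDerivAt

lemma hasFDerivAt_inv_sq_coordX {i : Fin n} (hz : z.1 i ≠ 0) :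
    HasFDerivAt (fun w : PhaseSpace n => ((w.1 i) ^ 2)⁻¹)
      ((-2 * ((z.1 i) ^ 3)⁻¹) • coordX n i) z := by
  have h := (hasDerivAt_inv (pow_ne_zero 2 hz)).comp_hasFDerivAt z ((hasFDerivAt_coordX i).pow 2)
  refine h.congr_fderiv (ContinuousLinearMap.ext fun w => ?_)
  simp only [Nat.add_one_sub_one, pow_one, nsmul_eq_mul, Nat.cast_ofNat, neg_smul,
    neg_apply, smul_apply, coordX_apply, smul_eq_mul]
  field_simp

def covector (u v : Fin n → ℝ) : PhaseSpace n →L[ℝ] ℝ :=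
  ∑ i, (u i • coordX n i + v i • coordY n i)

lemma pbr_eq_of_hasFDerivAt {f g : PhaseSpace n → ℝ}
    {fx fy gx gy : Fin n → ℝ} (hf : HasFDerivAt f (covector fx fy) z)
    (hg : HasFDerivAt g (covector gx gy) z) :
    pbr n f g z = ∑ i, (fx i * gy i - fy i * gx i) := by
  simp [pbr, pdq, pdp, hf.fderiv, hg.fderiv, covector, Pi.single_apply]

end PhaseSpace

lemma deriv_quadratic (c₀ c₁ c₂ t : ℝ) :
    deriv (fun s => c₀ + c₁ * s + c₂ * s ^ 2) t = c₁ + 2 * c₂ * t := by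
  have h := ((hasDerivAt_id' t).const_mul c₁ |>.const_add c₀).add
    ((hasDerivAt_pow 2 t).const_mul c₂)
  exact (h.congr_deriv (by norm_num; ring)).deriv

lemma deriv_HH1_t2 (a t1 t2 : ℝ) (z : PhaseSpace 2) :
    deriv (fun s => HH1 a t1 s z) t2
      = 3 * ((z.1 0) ^ 2 + (1 / 4) * (z.1 1) ^ 2) + 6 * t2 * z.1 0 := by
  have hquad : (fun s => HH1 a t1 s z) = fun s =>
      HH1 a t1 0 z + 3 * ((z.1 0) ^ 2 + (1 / 4) * (z.1 1) ^ 2) * s + 3 * z.1 0 * s ^ 2 := by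
    funext s
    simp only [HH1]
    ring
  rw [hquad, deriv_quadratic]
  ring

lemma deriv_HH2_t1 (a t1 t2 : ℝ) (z : PhaseSpace 2) :
    deriv (fun s => HH2 a s t2 z) t1 = (1 / 4) * (z.1 1) ^ 2 - 3 * t2 ^ 2 - t1 := by
  have hquad : (fun s => HH2 a s t2 z) = fun s =>
      HH2 a 0 t2 z + ((1 / 4) * (z.1 1) ^ 2 - 3 * t2 ^ 2) * s + (-1 / 2) * s ^ 2 := by
    funext s
    simp only [HH2]
    ring
  rw [hquad, deriv_quadratic]
  ring

section Gradients

variable (a t1 t2 : ℝ) {z : PhaseSpace 2}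

lemma hasFDerivAt_HH1 (hz : z.1 1 ≠ 0) :
    HasFDerivAt (HH1 a t1 t2)
      (covector ![3 * (z.1 0) ^ 2 + (1 / 2) * (z.1 1) ^ 2 + 6 * t2 * z.1 0 + (t1 + 3 * t2 ^ 2),
        z.1 0 * z.1 1 - 2 * a * ((z.1 1) ^ 3)⁻¹ + (3 / 2) * t2 * z.1 1] z.2) z := by
  have hx0 := hasFDerivAt_coordX (z := z) 0
  have hx1 := hasFDerivAt_coordX (z := z) 1
  have hy0 := hasFDerivAt_coordY (z := z) 0
  have hy1 := hasFDerivAt_coordY (z := z) 1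
  have h := (((((((hy0.pow 2).const_mul (1 / 2 : ℝ)).add ((hy1.pow 2).const_mul (1 / 2 : ℝ))).add
      (hx0.pow 3)).add ((hx0.const_mul (1 / 2 : ℝ)).mul (hx1.pow 2))).add
      ((hasFDerivAt_inv_sq_coordX hz).const_mul a)).add
      (((hx0.pow 2).add ((hx1.pow 2).const_mul (1 / 4 : ℝ))).const_mul (3 * t2))).add
      (hx0.const_mul (t1 + 3 * t2 ^ 2))
  refine h.congr_fderiv (ContinuousLinearMap.ext fun w => ?_)
  simp only [covector, Fin.sum_univ_two, Matrix.cons_val_zero, Matrix.cons_val_one,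
    Nat.add_one_sub_one, pow_one, nsmul_eq_mul, Nat.cast_ofNat, add_apply, smul_apply,
    coordX_apply, coordY_apply, smul_eq_mul]
  ring

lemma hasFDerivAt_HH2 (hz : z.1 1 ≠ 0) :
    HasFDerivAt (HH2 a t1 t2)
      (covector
        ![-(1 / 2) * (z.2 1) ^ 2 + (1 / 2) * z.1 0 * (z.1 1) ^ 2 - a * ((z.1 1) ^ 2)⁻¹
            + (3 / 4) * t2 * (z.1 1) ^ 2,
          (1 / 2) * z.2 0 * z.2 1 + (1 / 4) * (z.1 1) ^ 3 + (1 / 2) * (z.1 0) ^ 2 * z.1 1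
            + 2 * a * z.1 0 * ((z.1 1) ^ 3)⁻¹ + (3 / 2) * t2 * z.1 0 * z.1 1
            + (1 / 2) * (t1 + 3 * t2 ^ 2) * z.1 1]
        ![(1 / 2) * z.1 1 * z.2 1 - 1, (1 / 2) * z.1 1 * z.2 0 - z.1 0 * z.2 1]) z := by
  have hx0 := hasFDerivAt_coordX (z := z) 0
  have hx1 := hasFDerivAt_coordX (z := z) 1
  have hy0 := hasFDerivAt_coordY (z := z) 0
  have hy1 := hasFDerivAt_coordY (z := z) 1
  have h := (((((((((hx1.const_mul (1 / 2 : ℝ)).mul hy0).mul hy1).sub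
      ((hx0.const_mul (1 / 2 : ℝ)).mul (hy1.pow 2))).sub hy0).add
      ((hx1.pow 4).const_mul (1 / 16 : ℝ))).add
      (((hx0.pow 2).const_mul (1 / 4 : ℝ)).mul (hx1.pow 2))).sub
      ((hx0.const_mul a).mul (hasFDerivAt_inv_sq_coordX hz))).add
      ((hx0.const_mul ((3 / 4 : ℝ) * t2)).mul (hx1.pow 2))).add
      ((hx1.pow 2).const_mul ((1 / 4 : ℝ) * (t1 + 3 * t2 ^ 2)))
      |>.sub_const ((1 / 2) * t1 ^ 2 + 3 * t1 * t2 ^ 2)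
  refine h.congr_fderiv (ContinuousLinearMap.ext fun w => ?_)
  simp only [covector, Fin.sum_univ_two, Matrix.cons_val_zero, Matrix.cons_val_one, Pi.mul_apply,
    Nat.add_one_sub_one, pow_one, nsmul_eq_mul, Nat.cast_ofNat, add_apply, sub_apply, smul_apply,
    coordX_apply, coordY_apply, smul_eq_mul]
  ring

end Gradients

/-- The non-autonomous Hénon–Heiles Hamiltonians satisfy the
classical Frobenius condition with vanishing right-hand side. -/
theorem henon_heiles_frobenius (a : ℝ) (t1 t2 : ℝ)
    (z : (Fin 2 → ℝ) × (Fin 2 → ℝ)) (hz : z.1 1 ≠ 0) :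
    deriv (fun s => HH1 a t1 s z) t2 - deriv (fun s => HH2 a s t2 z) t1
      + pbr 2 (HH1 a t1 t2) (HH2 a t1 t2) z = 0 := by
  rw [deriv_HH1_t2, deriv_HH2_t1,
    pbr_eq_of_hasFDerivAt (hasFDerivAt_HH1 a t1 t2 hz) (hasFDerivAt_HH2 a t1 t2 hz)]
  simp only [Fin.sum_univ_two, Matrix.cons_val_zero, Matrix.cons_val_one]
  field_simp
  ring

end P3
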